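/- arXiv:2505.07640 — 2 statements merged into one kernel-verified Lean document; each statement's English description precedes it below -/
import Mathlib

section
/- For integers n, m with m ≤ (n+1)/3, the partial sum of binomial coefficients satisfies Σ_{s=0}^{m} C(n, s) ≤ 2·C(n, m). -/
/-!
While `3 s + 2 ≤ n`, the ratio `C(n, s+1) / C(n, s) = (n - s) / (s + 1)` is at least `2`, so up to `m`
the binomial coefficients at least double at each step and their partial sum is dominated by a
geometric series with ratio `1/2`.
-/

open Finset

theorem sum_range_succ_le_two_mul_of_two_mul_le {R : Type*} [Semiring R] [PartialOrder R]
    [IsOrderedAddMonoid R] [CanonicallyOrderedAdd R] {f : ℕ → R} {m : ℕ}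
    (hf : ∀ s < m, 2 * f s ≤ f (s + 1)) :
    ∑ s ∈ range (m + 1), f s ≤ 2 * f m := by
  induction m with
  | zero => simp [two_mul]
  | succ m ih =>
    calc ∑ s ∈ range (m + 2), f s = ∑ s ∈ range (m + 1), f s + f (m + 1) := sum_range_succ _ _
      _ ≤ 2 * f m + f (m + 1) := by gcongr; exact ih fun s hs ↦ hf s (by omega)
      _ ≤ 2 * f (m + 1) := by rw [two_mul (f (m + 1))]; gcongr; exact hf m m.lt_succ_self

theorem Nat.two_mul_choose_le_choose_succ {n m : ℕ} (h : 3 * m + 2 ≤ n) :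
    2 * n.choose m ≤ n.choose (m + 1) := by
  have hstep : n.choose (m + 1) * (m + 1) = n.choose m * (n - m) := Nat.choose_succ_right_eq n m
  refine Nat.le_of_mul_le_mul_right ?_ m.succ_pos
  calc 2 * n.choose m * (m + 1) = n.choose m * (2 * (m + 1)) := by ring
    _ ≤ n.choose m * (n - m) := Nat.mul_le_mul_left _ (by omega)
    _ = n.choose (m + 1) * (m + 1) := hstep.symm

/-- For `m ≤ (n+1)/3`, the partial sum of binomial coefficients satisfies
`Σ_{s=0}^{m} C(n, s) ≤ 2 C(n, m)`. -/
theorem sum_choose_le_two_mul (n m : ℕ) (h : 3 * m ≤ n + 1) :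
    ∑ s ∈ Finset.range (m + 1), n.choose s ≤ 2 * n.choose m :=
  sum_range_succ_le_two_mul_of_two_mul_le fun _ hs ↦ Nat.two_mul_choose_le_choose_succ (by omega)
end

section
/- (Alternative leave-M-out identity) Under the same setting, β̂_{\M} − β̂ = Ḡ^{-1} Σ_{i∈M} ℓ̇(y_i | x_iᵀ β̂_{\M}) x_i, where Ḡ = ∫₀¹ G(t β̂ + (1−t) β̂_{\M}) dt is the averaged full-data Hessian G(β) = Σ_{i=1}^n ℓ̈(y_i|x_iᵀβ) x_i x_iᵀ + λ ∇²r(β). -/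
open MeasureTheory intervalIntegral

/-- The rank-one operator `v ↦ ⟪x, v⟫ x`. -/
noncomputable def rankOne {p : ℕ} (x : EuclideanSpace ℝ (Fin p)) :
    EuclideanSpace ℝ (Fin p) →L[ℝ] EuclideanSpace ℝ (Fin p) :=
  (innerSL ℝ x).smulRight x

/-!
Both minimizers are stationary points: the full-data gradient `g` vanishes at `β̂`, and the
leave-`M`-out gradient vanishes at `β̂_{\M}`, so `g(β̂_{\M}) = Σ_{i∈M} ℓ̇(y_i | x_iᵀ β̂_{\M}) x_i`.
Since `G` is the derivative of `g`, the fundamental theorem of calculus along the segment from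
`β̂_{\M}` to `β̂` gives `Ḡ (β̂ - β̂_{\M}) = g(β̂) - g(β̂_{\M})`, and it remains to apply `Ḡ⁻¹`.
-/

section MeanValue

variable {E F : Type*} [NormedAddCommGroup E] [NormedSpace ℝ E]
  [NormedAddCommGroup F] [NormedSpace ℝ F] [CompleteSpace F]
  {f : E → F} {f' : E → E →L[ℝ] F} {a b : E}

theorem integral_fderiv_segment_apply_sub
    (hf : ∀ z ∈ segment ℝ a b, HasFDerivAt f (f' z) z)
    (hint : IntervalIntegrable (fun t : ℝ => f' (t • a + (1 - t) • b)) volume 0 1) :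
    (∫ t in (0:ℝ)..1, f' (t • a + (1 - t) • b)) (a - b) = f a - f b := by
  set γ : ℝ → E := fun t => t • a + (1 - t) • b
  have hγ : ∀ t, HasDerivAt γ (a - b) t := fun t => by
    simpa [γ, sub_eq_add_neg] using
      ((hasDerivAt_id' t).smul_const a).fun_add (((hasDerivAt_id' t).const_sub 1).smul_const b)
  have hγseg : ∀ t ∈ Set.uIcc (0:ℝ) 1, γ t ∈ segment ℝ a b := fun t ht => by
    rw [Set.uIcc_of_le zero_le_one] at ht
    exact ⟨t, 1 - t, ht.1, sub_nonneg.2 ht.2, add_sub_cancel _ _, rfl⟩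
  calc (∫ t in (0:ℝ)..1, f' (γ t)) (a - b) = ∫ t in (0:ℝ)..1, f' (γ t) (a - b) :=
        ContinuousLinearMap.intervalIntegral_apply hint _
    _ = f (γ 1) - f (γ 0) :=
        integral_eq_sub_of_hasDerivAt (fun t ht => (hf _ (hγseg t ht)).comp_hasDerivAt t (hγ t))
          ⟨(ContinuousLinearMap.apply ℝ F (a - b)).integrable_comp hint.1,
            (ContinuousLinearMap.apply ℝ F (a - b)).integrable_comp hint.2⟩
    _ = f a - f b := by simp [γ]

theorem sub_eq_symm_apply_sub_of_coe_eq_integral_fderiv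
    (hf : ∀ z ∈ segment ℝ a b, HasFDerivAt f (f' z) z) (e : E ≃L[ℝ] F)
    (he : (e : E →L[ℝ] F) = ∫ t in (0:ℝ)..1, f' (t • a + (1 - t) • b)) :
    a - b = e.symm (f a - f b) := by
  by_cases hint : IntervalIntegrable (fun t : ℝ => f' (t • a + (1 - t) • b)) volume 0 1
  · rw [← integral_fderiv_segment_apply_sub hf hint, ← he]
    simp
  · -- the integral is the junk value `0`, so `e = 0` forces `E` to be trivial
    rw [integral_undef hint] at he
    have he0 : ∀ v, e v = 0 := fun v => by simpa using DFunLike.congr_fun he v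
    have : Subsingleton E := ⟨fun v w => e.injective (by rw [he0, he0])⟩
    exact Subsingleton.elim _ _

end MeanValue

section RegularizedRisk

open InnerProductSpace

variable {E ι : Type*} [NormedAddCommGroup E] [InnerProductSpace ℝ E]

def regularizedRiskGrad (s : Finset ι) (x : ι → E) (y : ι → ℝ) (dℓ : ℝ → ℝ → ℝ) (lam : ℝ)
    (gr : E → E) (β : E) : E :=
  (∑ i ∈ s, dℓ (y i) ⟪x i, β⟫_ℝ • x i) + lam • gr β

theorem hasGradientAt_regularizedRisk [CompleteSpace E] (s : Finset ι) (x : ι → E) (y : ι → ℝ)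
    {ℓ dℓ : ℝ → ℝ → ℝ} (hℓ : ∀ a z, HasDerivAt (ℓ a) (dℓ a z) z) (lam : ℝ) {r : E → ℝ}
    {gr : E → E} (hr : ∀ β, HasGradientAt r (gr β) β) (β : E) :
    HasGradientAt (fun β => (∑ i ∈ s, ℓ (y i) ⟪x i, β⟫_ℝ) + lam * r β)
      (regularizedRiskGrad s x y dℓ lam gr β) β := by
  rw [hasGradientAt_iff_hasFDerivAt]
  have hloss : ∀ i, HasFDerivAt (fun β => ℓ (y i) ⟪x i, β⟫_ℝ)
      (toDual ℝ E (dℓ (y i) ⟪x i, β⟫_ℝ • x i) : E →L[ℝ] ℝ) β := fun i => by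
    refine ((hℓ (y i) _).comp_hasFDerivAt β (innerSL ℝ (x i)).hasFDerivAt).congr_fderiv ?_
    ext v
    simp
  have hreg := ((hr β).hasFDerivAt).const_mul lam
  refine ((HasFDerivAt.fun_sum fun i _ => hloss i).add hreg).congr_fderiv ?_
  simp [regularizedRiskGrad, map_sum]

theorem IsLocalMin.hasGradientAt_eq_zero [CompleteSpace E] {f : E → ℝ} {g β : E}
    (h : IsLocalMin f β) (hg : HasGradientAt f g β) : g = 0 :=
  (toDual ℝ E).map_eq_zero_iff.1 (h.hasFDerivAt_eq_zero hg.hasFDerivAt)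

theorem regularizedRiskGrad_eq_sum_of_compl_eq_zero [Fintype ι] [DecidableEq ι] {M : Finset ι}
    {x : ι → E} {y : ι → ℝ} {dℓ : ℝ → ℝ → ℝ} {lam : ℝ} {gr : E → E} {β : E}
    (h : regularizedRiskGrad Mᶜ x y dℓ lam gr β = 0) :
    regularizedRiskGrad Finset.univ x y dℓ lam gr β = ∑ i ∈ M, dℓ (y i) ⟪x i, β⟫_ℝ • x i := by
  rw [regularizedRiskGrad] at h
  rw [regularizedRiskGrad, ← Finset.sum_add_sum_compl M, add_assoc, h, add_zero]

theorem hasFDerivAt_regularizedRiskGrad (s : Finset ι) (x : ι → E) (y : ι → ℝ)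
    {dℓ ddℓ : ℝ → ℝ → ℝ} (hdℓ : ∀ a z, HasDerivAt (dℓ a) (ddℓ a z) z) (lam : ℝ) {gr : E → E}
    {Hr : E → E →L[ℝ] E} (hgr : ∀ β, HasFDerivAt gr (Hr β) β) (β : E) :
    HasFDerivAt (regularizedRiskGrad s x y dℓ lam gr)
      ((∑ i ∈ s, ddℓ (y i) ⟪x i, β⟫_ℝ • (innerSL ℝ (x i)).smulRight (x i)) + lam • Hr β) β := by
  refine (HasFDerivAt.fun_sum fun i _ => ?_).add ((hgr β).const_smul lam)
  refine (((hdℓ (y i) _).comp_hasFDerivAt β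
    (innerSL ℝ (x i)).hasFDerivAt).smul_const (x i)).congr_fderiv ?_
  ext v
  simp [smul_smul]

end RegularizedRisk

theorem leave_M_out_identity_alt_general (n p : ℕ)
    (x : Fin n → EuclideanSpace ℝ (Fin p)) (y : Fin n → ℝ)
    (M : Finset (Fin n))
    (ℓ dℓ ddℓ : ℝ → ℝ → ℝ)
    (hd1 : ∀ a z, HasDerivAt (ℓ a) (dℓ a z) z)
    (hd2 : ∀ a z, HasDerivAt (dℓ a) (ddℓ a z) z)
    (r : EuclideanSpace ℝ (Fin p) → ℝ)
    (gr : EuclideanSpace ℝ (Fin p) → EuclideanSpace ℝ (Fin p))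
    (Hr : EuclideanSpace ℝ (Fin p) →
      (EuclideanSpace ℝ (Fin p) →L[ℝ] EuclideanSpace ℝ (Fin p)))
    (hgr : ∀ β, HasGradientAt r (gr β) β)
    (hHr : ∀ β, HasFDerivAt gr (Hr β) β)
    (lam : ℝ)
    (L LM : EuclideanSpace ℝ (Fin p) → ℝ)
    (hL : L = fun β => (∑ i, ℓ (y i) ((inner ℝ (x i) β : ℝ))) + lam * r β)
    (hLM : LM = fun β => (∑ i ∈ Mᶜ, ℓ (y i) ((inner ℝ (x i) β : ℝ))) + lam * r β)
    (βhat βhatM : EuclideanSpace ℝ (Fin p))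
    (hmin : IsMinOn L Set.univ βhat) (hminM : IsMinOn LM Set.univ βhatM)
    (G : EuclideanSpace ℝ (Fin p) →
      (EuclideanSpace ℝ (Fin p) →L[ℝ] EuclideanSpace ℝ (Fin p)))
    (hG : G = fun β =>
      (∑ i, ddℓ (y i) ((inner ℝ (x i) β : ℝ)) • rankOne (x i)) + lam • Hr β)
    (Gbar : EuclideanSpace ℝ (Fin p) ≃L[ℝ] EuclideanSpace ℝ (Fin p))
    (hGbar : (Gbar : EuclideanSpace ℝ (Fin p) →L[ℝ] EuclideanSpace ℝ (Fin p))
      = ∫ t in (0:ℝ)..1, G (t • βhat + (1 - t) • βhatM)) :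
    βhatM - βhat = Gbar.symm (∑ i ∈ M, dℓ (y i) ((inner ℝ (x i) βhatM : ℝ)) • x i) := by
  subst hL hLM
  have hstat : regularizedRiskGrad Finset.univ x y dℓ lam gr βhat = 0 :=
    (hmin.isLocalMin (by simp)).hasGradientAt_eq_zero
      (hasGradientAt_regularizedRisk _ x y hd1 lam hgr βhat)
  have hstatM : regularizedRiskGrad Mᶜ x y dℓ lam gr βhatM = 0 :=
    (hminM.isLocalMin (by simp)).hasGradientAt_eq_zero
      (hasGradientAt_regularizedRisk _ x y hd1 lam hgr βhatM)
  have hg : ∀ β ∈ segment ℝ βhat βhatM,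
      HasFDerivAt (regularizedRiskGrad Finset.univ x y dℓ lam gr) (G β) β := fun β _ => by
    subst hG
    exact hasFDerivAt_regularizedRiskGrad _ x y hd2 lam hHr β
  have hdiff := sub_eq_symm_apply_sub_of_coe_eq_integral_fderiv hg Gbar hGbar
  rw [hstat, regularizedRiskGrad_eq_sum_of_compl_eq_zero hstatM, zero_sub, map_neg] at hdiff
  rw [← neg_sub, hdiff, neg_neg]

/-- Alternative leave-`M`-out identity for regularized ERM:
`β̂_{\M} - β̂ = Ḡ⁻¹ Σ_{i∈M} ℓ̇(y_i | x_iᵀ β̂_{\M}) x_i`, where `Ḡ` is the averaged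
full-data Hessian along the segment between `β̂` and `β̂_{\M}`. -/
theorem leave_M_out_identity_alt (n p : ℕ)
    (x : Fin n → EuclideanSpace ℝ (Fin p)) (y : Fin n → ℝ)
    (M : Finset (Fin n))
    (ℓ dℓ ddℓ : ℝ → ℝ → ℝ)
    (hd1 : ∀ a z, HasDerivAt (ℓ a) (dℓ a z) z)
    (hd2 : ∀ a z, HasDerivAt (dℓ a) (ddℓ a z) z)
    (r : EuclideanSpace ℝ (Fin p) → ℝ)
    (gr : EuclideanSpace ℝ (Fin p) → EuclideanSpace ℝ (Fin p))
    (Hr : EuclideanSpace ℝ (Fin p) →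
      (EuclideanSpace ℝ (Fin p) →L[ℝ] EuclideanSpace ℝ (Fin p)))
    (hgr : ∀ β, HasGradientAt r (gr β) β)
    (hHr : ∀ β, HasFDerivAt gr (Hr β) β)
    (lam : ℝ) (hlam : 0 < lam)
    (L LM : EuclideanSpace ℝ (Fin p) → ℝ)
    (hL : L = fun β => (∑ i, ℓ (y i) ((inner ℝ (x i) β : ℝ))) + lam * r β)
    (hLM : LM = fun β => (∑ i ∈ Mᶜ, ℓ (y i) ((inner ℝ (x i) β : ℝ))) + lam * r β)
    (hsc : StrictConvexOn ℝ Set.univ L) (hscM : StrictConvexOn ℝ Set.univ LM)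
    (βhat βhatM : EuclideanSpace ℝ (Fin p))
    (hmin : IsMinOn L Set.univ βhat) (hminM : IsMinOn LM Set.univ βhatM)
    (G : EuclideanSpace ℝ (Fin p) →
      (EuclideanSpace ℝ (Fin p) →L[ℝ] EuclideanSpace ℝ (Fin p)))
    (hG : G = fun β =>
      (∑ i, ddℓ (y i) ((inner ℝ (x i) β : ℝ)) • rankOne (x i)) + lam • Hr β)
    (Gbar : EuclideanSpace ℝ (Fin p) ≃L[ℝ] EuclideanSpace ℝ (Fin p))
    (hGbar : (Gbar : EuclideanSpace ℝ (Fin p) →L[ℝ] EuclideanSpace ℝ (Fin p))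
      = ∫ t in (0:ℝ)..1, G (t • βhat + (1 - t) • βhatM)) :
    βhatM - βhat = Gbar.symm (∑ i ∈ M, dℓ (y i) ((inner ℝ (x i) βhatM : ℝ)) • x i) :=
  leave_M_out_identity_alt_general n p x y M ℓ dℓ ddℓ hd1 hd2 r gr Hr hgr hHr lam L LM hL hLM βhat
    βhatM hmin hminM G hG Gbar hGbar
end
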